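/- Let A = {ω ∈ ℕ^ℕ : there exists i ≥ 1 such that the tree encoded by ω has at least i vertices, node i lies on an even level, and ω_i = 1} (i.e., some node on an even level has exactly one child). Then A is rapidly determined over the interval (λ₀, λ₁) for every 0 ≤ λ₀ < λ₁ ≤ ∞. -/

import Mathlib

open MeasureTheory ProbabilityTheory Filter Topology

/-- `P` is the family of laws of a sequence of i.i.d. Poisson(λ) random variables:
for each `λ > 0`, `P λ` is a probability measure on `ℕ → ℕ` whose finite-dimensional
marginals are finite products of Poisson(λ) distributions.  This characterizes the
countable product of Poisson(λ) measures on `ℕ^ℕ`. -/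
def IsPoissonSeedFamily (P : ℝ → Measure (ℕ → ℕ)) : Prop :=
  ∀ lam : ℝ, 0 < lam → IsProbabilityMeasure (P lam) ∧
    ∀ k : ℕ, (P lam).map (fun ω (j : Fin k) => ω j.1)
      = Measure.pi (fun _ : Fin k => poissonMeasure lam.toNNReal)

/-- The first `k` coordinates `(ω₁, …, ω_k)` of a seed `ω ∈ ℕ^ℕ` (0-indexed). -/
def restrictSeed (k : ℕ) (ω : ℕ → ℕ) : Fin k → ℕ := fun j => ω j.1

/-- An event is `k`-tautologically determined if it is of the form
`{ω : (ω₁, …, ω_k) ∈ B}` for some `B ⊆ ℕ^k`. -/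
def TautDetermined (k : ℕ) (A : Set (ℕ → ℕ)) : Prop :=
  ∃ B : Set (Fin k → ℕ), A = {ω | restrictSeed k ω ∈ B}

/-- The tree encoded by the seed `ω` in breadth-first order (node `i+1` has `ω i`
children) has at least `k` vertices: `ω₁ + ⋯ + ω_j ≥ j` for every `1 ≤ j ≤ k - 1`. -/
def treeAtLeast (ω : ℕ → ℕ) (k : ℕ) : Prop :=
  ∀ j : ℕ, 1 ≤ j → j ≤ k - 1 → j ≤ ∑ i ∈ Finset.range j, ω i

/-- The 0-based index of the parent of the node of 0-based index `i` (for `i ≥ 1`):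
the least `p` such that `ω₁ + ⋯ + ω_{p+1} ≥ i`. -/
noncomputable def parent (ω : ℕ → ℕ) (i : ℕ) : ℕ :=
  sInf {p : ℕ | i ≤ ∑ t ∈ Finset.range (p + 1), ω t}

/-- The level of the node of 0-based index `i`: the root (index `0`) has level `0`,
and the level of any other node is one plus the level of its parent. -/
noncomputable def level (ω : ℕ → ℕ) (i : ℕ) : ℕ :=
  if h : parent ω i < i then level ω (parent ω i) + 1 else 0
termination_by i
decreasing_by exact h

/-!
A node on an odd level is a child of a node on an even level. So if the tree has at least `k`
vertices and no even-level node among the first `k` has exactly one child, the even-level nodes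
among the first `k` have at least as many children as there are odd-level nodes among them.
Fix `z > 1` and give an even-level node with `n` children the weight `z ^ n` (and `0` if `n = 1`),
an odd-level node the weight `z⁻¹`: the product of the first `k` weights is then `≥ 1` on this
event. Since the level of node `j` is decided by `ω 0, …, ω (j - 1)`, the product is a
supermartingale whose factors have mean at most some `ρ < 1`, so the event has probability
at most `ρ ^ k`; it contains the symmetric difference of the event and its truncation to the
first `k` nodes.
-/

open scoped ENNReal NNReal
open Finset

lemma treeAtLeast_succ_iff {ω : ℕ → ℕ} {k : ℕ} :
    treeAtLeast ω (k + 1) ↔ ∀ j, 1 ≤ j → j ≤ k → j ≤ ∑ t ∈ range j, ω t := by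
  simp [treeAtLeast]

lemma treeAtLeast.mono {ω : ℕ → ℕ} {k m : ℕ} (h : treeAtLeast ω k) (hmk : m ≤ k) :
    treeAtLeast ω m :=
  fun j hj hjm => h j hj (by omega)

lemma treeAtLeast.congr {ω ω' : ℕ → ℕ} {k : ℕ} (h : treeAtLeast ω k)
    (hω : ∀ t < k, ω t = ω' t) : treeAtLeast ω' k := by
  intro j hj hjk
  rw [← sum_congr rfl fun t ht => hω t (by simp at ht; omega)]
  exact h j hj hjk

lemma parent_eq_of_sum_lt_of_le {ω : ℕ → ℕ} {i p : ℕ} (hlt : ∑ t ∈ range p, ω t < i)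
    (hle : i ≤ ∑ t ∈ range (p + 1), ω t) : parent ω i = p := by
  refine le_antisymm (Nat.sInf_le hle) (le_csInf ⟨p, hle⟩ fun q (hq : i ≤ _) => ?_)
  by_contra! hqp
  have := sum_le_sum_of_subset (f := ω) (range_subset_range.2 (by omega : q + 1 ≤ p))
  omega

lemma parent_spec {ω : ℕ → ℕ} {i : ℕ} (hi : 1 ≤ i) (hs : i ≤ ∑ t ∈ range i, ω t) :
    parent ω i < i ∧ ∑ t ∈ range (parent ω i), ω t < i ∧
      i ≤ ∑ t ∈ range (parent ω i + 1), ω t := by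
  have hmem : i - 1 ∈ {p | i ≤ ∑ t ∈ range (p + 1), ω t} := by
    simpa [Nat.sub_add_cancel hi] using hs
  have hle : parent ω i ≤ i - 1 := Nat.sInf_le hmem
  refine ⟨by omega, ?_, Nat.sInf_mem ⟨_, hmem⟩⟩
  by_contra! h
  obtain ⟨q, hq⟩ : ∃ q, parent ω i = q + 1 :=
    Nat.exists_eq_add_one.2 (Nat.pos_of_ne_zero fun h0 => by simp [h0] at h; omega)
  have : parent ω i ≤ q := Nat.sInf_le (show i ≤ ∑ t ∈ range (q + 1), ω t from hq ▸ h)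
  omega

lemma parent_congr {ω ω' : ℕ → ℕ} {i : ℕ} (hi : 1 ≤ i) (hs : i ≤ ∑ t ∈ range i, ω t)
    (hω : ∀ t < i, ω t = ω' t) : parent ω i = parent ω' i := by
  obtain ⟨hpi, hlt, hle⟩ := parent_spec hi hs
  have hsum : ∀ p ≤ i, ∑ t ∈ range p, ω t = ∑ t ∈ range p, ω' t := fun p hp =>
    sum_congr rfl fun t ht => hω t (by simp at ht; omega)
  rw [hsum _ hpi.le] at hlt
  rw [hsum _ hpi] at hle
  exact (parent_eq_of_sum_lt_of_le hlt hle).symm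

lemma level_zero (ω : ℕ → ℕ) : level ω 0 = 0 := by
  rw [level]; simp

lemma level_of_parent_lt {ω : ℕ → ℕ} {i : ℕ} (h : parent ω i < i) :
    level ω i = level ω (parent ω i) + 1 := by
  rw [level, dif_pos h]

lemma level_congr {ω ω' : ℕ → ℕ} {i : ℕ} (hT : treeAtLeast ω (i + 1))
    (hω : ∀ t < i, ω t = ω' t) : level ω i = level ω' i := by
  induction i using Nat.strong_induction_on with
  | _ i ih =>
    rcases Nat.eq_zero_or_pos i with rfl | hi
    · rw [level_zero, level_zero]
    have hs := treeAtLeast_succ_iff.1 hT i hi le_rfl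
    have hp := (parent_spec hi hs).1
    have hpp := parent_congr hi hs hω
    have hp' : parent ω' i < i := hpp ▸ hp
    rw [level_of_parent_lt hp, level_of_parent_lt hp', ← hpp,
      ih _ hp (hT.mono (by omega)) fun t ht => hω t (by omega)]

/-- Every odd-level node among the first `k` is a child of an even-level node among them, and
node `p` has `ω p` children. -/
lemma card_odd_level_le_sum_even_level {ω : ℕ → ℕ} {k : ℕ} (hT : treeAtLeast ω k) :
    #{j ∈ range k | ¬Even (level ω j)} ≤ ∑ p ∈ range k with Even (level ω p), ω p := by
  have hodd : ∀ j ∈ {j ∈ range k | ¬Even (level ω j)}, parent ω j < j ∧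
      Even (level ω (parent ω j)) ∧ ∑ t ∈ range (parent ω j), ω t < j ∧
      j ≤ ∑ t ∈ range (parent ω j + 1), ω t := by
    intro j hj
    simp only [mem_filter, mem_range] at hj
    have hj1 : 1 ≤ j := Nat.pos_of_ne_zero fun h0 => hj.2 (by simp [h0, level_zero])
    obtain ⟨hp, hlt, hle⟩ := parent_spec hj1 (hT j hj1 (by omega))
    refine ⟨hp, ?_, hlt, hle⟩
    rw [level_of_parent_lt hp, Nat.even_add_one, not_not] at hj
    exact hj.2
  rw [card_eq_sum_card_fiberwise (t := {p ∈ range k | Even (level ω p)}) fun j hj =>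
    mem_filter.2 ⟨mem_range.2 ((hodd j hj).1.trans (mem_range.1 (mem_filter.1 hj).1)),
      (hodd j hj).2.1⟩]
  refine sum_le_sum fun p _ => ?_
  calc #{j ∈ {j ∈ range k | ¬Even (level ω j)} | parent ω j = p}
      ≤ #(Ioc (∑ t ∈ range p, ω t) (∑ t ∈ range (p + 1), ω t)) := by
        refine card_le_card fun j hj => ?_
        rw [mem_filter] at hj
        have := hodd j hj.1
        rw [hj.2] at this
        simp only [mem_Ioc]
        omega
    _ = ω p := by simp [sum_range_succ]

def extendSeed (k : ℕ) (x : Fin k → ℕ) : ℕ → ℕ := fun t => if h : t < k then x ⟨t, h⟩ else 0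

lemma extendSeed_restrictSeed {k t : ℕ} (ω : ℕ → ℕ) (ht : t < k) :
    extendSeed k (restrictSeed k ω) t = ω t := by
  simp [extendSeed, restrictSeed, ht]

lemma extendSeed_snoc_of_lt {k t : ℕ} (x : Fin k → ℕ) (n : ℕ) (ht : t < k) :
    extendSeed (k + 1) (Fin.snoc x n) t = extendSeed k x t := by
  simp only [extendSeed, ht, dif_pos, show t < k + 1 by omega]
  exact Fin.snoc_castSucc (i := ⟨t, ht⟩) ..

lemma extendSeed_snoc_self {k : ℕ} (x : Fin k → ℕ) (n : ℕ) :
    extendSeed (k + 1) (Fin.snoc x n) k = n := by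
  simp only [extendSeed, Nat.lt_add_one, dif_pos]
  exact Fin.snoc_last (α := fun _ => ℕ) ..

lemma eq_preimage_restrictSeed_of_congr {S : Set (ℕ → ℕ)} {k : ℕ}
    (hS : ∀ ⦃ω ω'⦄, (∀ t < k, ω t = ω' t) → ω ∈ S → ω' ∈ S) :
    S = restrictSeed k ⁻¹' {x | extendSeed k x ∈ S} := by
  ext ω
  exact ⟨hS fun t ht => (extendSeed_restrictSeed ω ht).symm,
    hS fun t ht => extendSeed_restrictSeed ω ht⟩

def DependsOnPast {β : Type*} (f : (ℕ → ℕ) → ℕ → β) : Prop :=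
  ∀ ⦃ω ω' : ℕ → ℕ⦄ ⦃j : ℕ⦄, (∀ t < j, ω t = ω' t) → f ω j = f ω' j

noncomputable def prodWeight (f : (ℕ → ℕ) → ℕ → ℕ → ℝ≥0∞) (k : ℕ) (ω : ℕ → ℕ) : ℝ≥0∞ :=
  ∏ j ∈ range k, f ω j (ω j)

lemma prodWeight_extendSeed_snoc {f : (ℕ → ℕ) → ℕ → ℕ → ℝ≥0∞} (hf : DependsOnPast f) {k : ℕ}
    (x : Fin k → ℕ) (n : ℕ) :
    prodWeight f (k + 1) (extendSeed (k + 1) (Fin.snoc x n))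
      = prodWeight f k (extendSeed k x) * f (extendSeed k x) k n := by
  have hagree : ∀ t < k, extendSeed (k + 1) (Fin.snoc x n) t = extendSeed k x t :=
    fun t ht => extendSeed_snoc_of_lt x n ht
  rw [prodWeight, prod_range_succ, extendSeed_snoc_self, hf hagree, prodWeight]
  congr 1
  refine prod_congr rfl fun j hj => ?_
  rw [mem_range] at hj
  rw [hf fun t ht => hagree t (by omega), hagree j hj]

theorem lintegral_prodWeight_le_pow {μ : Measure ℕ} [SigmaFinite μ]
    {f : (ℕ → ℕ) → ℕ → ℕ → ℝ≥0∞} {ρ : ℝ≥0∞} (hf : DependsOnPast f)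
    (hρ : ∀ ω j, ∫⁻ n, f ω j n ∂μ ≤ ρ) (k : ℕ) :
    ∫⁻ x, prodWeight f k (extendSeed k x) ∂(Measure.pi fun _ : Fin k => μ) ≤ ρ ^ k := by
  simp only [lintegral_countable', Measure.pi_singleton] at hρ ⊢
  induction k with
  | zero => simp [prodWeight]
  | succ k ih =>
    rw [← (Fin.snocEquiv fun _ => ℕ).tsum_eq, ENNReal.tsum_prod', ENNReal.tsum_comm, pow_succ]
    refine le_trans (ENNReal.tsum_le_tsum fun x => ?_) (by rw [ENNReal.tsum_mul_right]; gcongr)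
    have hsnoc : ∀ n, (Fin.snocEquiv fun _ => ℕ) (n, x) = Fin.snoc x n := fun n => rfl
    simp only [Fin.prod_univ_castSucc, hsnoc, prodWeight_extendSeed_snoc hf, Fin.snoc_castSucc,
      Fin.snoc_last]
    calc ∑' n, prodWeight f k (extendSeed k x) * f (extendSeed k x) k n *
          ((∏ j, μ {x j}) * μ {n})
        = prodWeight f k (extendSeed k x) * (∏ j, μ {x j}) *
            ∑' n, f (extendSeed k x) k n * μ {n} := by
          rw [← ENNReal.tsum_mul_left]
          exact tsum_congr fun n => by ring
      _ ≤ prodWeight f k (extendSeed k x) * (∏ j, μ {x j}) * ρ := by gcongr; exact hρ _ _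

/-- `level ω j` may depend on later coordinates when the tree has at most `j` vertices; this
version sees only `ω 0, …, ω (j - 1)`. -/
noncomputable def prefixLevel (ω : ℕ → ℕ) (j : ℕ) : ℕ :=
  level (extendSeed j (restrictSeed j ω)) j

lemma prefixLevel_eq_level {ω : ℕ → ℕ} {j : ℕ} (hT : treeAtLeast ω (j + 1)) :
    prefixLevel ω j = level ω j :=
  (level_congr hT fun _ ht => (extendSeed_restrictSeed ω ht).symm).symm

noncomputable def chernoffWeight (z : ℝ≥0∞) (ω : ℕ → ℕ) (j n : ℕ) : ℝ≥0∞ :=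
  if Even (prefixLevel ω j) then ({1}ᶜ : Set ℕ).indicator (z ^ ·) n else z⁻¹

lemma dependsOnPast_chernoffWeight (z : ℝ≥0∞) : DependsOnPast (chernoffWeight z) := by
  intro ω ω' j h
  have : restrictSeed j ω = restrictSeed j ω' := funext fun t => h t t.2
  unfold chernoffWeight prefixLevel
  rw [this]

lemma one_le_prodWeight_chernoffWeight {z : ℝ≥0∞} (hz : 1 ≤ z) (hz' : z ≠ ⊤) {ω : ℕ → ℕ}
    {k : ℕ} (hT : treeAtLeast ω k) (hno : ∀ j < k, ¬(Even (level ω j) ∧ ω j = 1)) :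
    1 ≤ prodWeight (chernoffWeight z) k ω := by
  have hfactor : ∀ j ∈ range k,
      chernoffWeight z ω j (ω j) = if Even (level ω j) then z ^ ω j else z⁻¹ := by
    intro j hj
    rw [mem_range] at hj
    rw [chernoffWeight, prefixLevel_eq_level (hT.mono hj)]
    split_ifs with he
    · exact Set.indicator_of_mem (show ω j ∈ ({1}ᶜ : Set ℕ) from fun h1 => hno j hj ⟨he, h1⟩) _
    · rfl
  rw [prodWeight, prod_congr rfl hfactor, prod_ite, prod_pow_eq_pow_sum, prod_const]
  have hz0 : z ≠ 0 := (zero_lt_one.trans_le hz).ne'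
  calc (1 : ℝ≥0∞) = (z * z⁻¹) ^ #{j ∈ range k | ¬Even (level ω j)} := by
        rw [ENNReal.mul_inv_cancel hz0 hz', one_pow]
    _ ≤ _ := by
      rw [mul_pow]
      gcongr
      exact card_odd_level_le_sum_even_level hT

lemma lintegral_pow_poissonMeasure (r z : ℝ≥0) :
    ∫⁻ n, (z : ℝ≥0∞) ^ n ∂Po(r) = ENNReal.ofReal (Real.exp (r * (z - 1))) := by
  have htilt : ∀ n : ℕ, (z : ℝ≥0∞) ^ n * Po(r) {n}
      = ENNReal.ofReal (Real.exp (r * (z - 1))) * Po(r * z) {n} := by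
    intro n
    rw [poissonMeasure_singleton, poissonMeasure_singleton, ← ENNReal.ofReal_coe_nnreal,
      ← ENNReal.ofReal_pow z.coe_nonneg, ← ENNReal.ofReal_mul (by positivity),
      ← ENNReal.ofReal_mul (by positivity)]
    congr 1
    push_cast
    rw [show Real.exp (-r) = Real.exp (r * (z - 1)) * Real.exp (-(r * z)) by
      rw [← Real.exp_add]; ring_nf]
    ring
  rw [lintegral_countable']
  have htotal : ∑' n, Po(r * z) {n} = 1 := by
    simpa using (lintegral_countable' (μ := Po(r * z)) 1).symm
  simp only [htilt, ENNReal.tsum_mul_left, htotal, mul_one]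

lemma lintegral_indicator_pow_poissonMeasure (r z : ℝ≥0) :
    ∫⁻ n, ({1}ᶜ : Set ℕ).indicator (fun n => (z : ℝ≥0∞) ^ n) n ∂Po(r)
      = ENNReal.ofReal (Real.exp (r * (z - 1)) - z * r * Real.exp (-r)) := by
  have h := lintegral_add_compl (μ := Po(r)) (fun n => (z : ℝ≥0∞) ^ n) (measurableSet_singleton 1)
  have hone : (z : ℝ≥0∞) ^ 1 * Po(r) {1} = ENNReal.ofReal (z * r * Real.exp (-r)) := by
    rw [poissonMeasure_singleton, pow_one, ← ENNReal.ofReal_coe_nnreal,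
      ← ENNReal.ofReal_mul z.coe_nonneg]
    congr 1
    simp only [pow_one, Nat.factorial_one, Nat.cast_one, div_one]
    ring
  rw [lintegral_singleton, lintegral_pow_poissonMeasure, hone] at h
  rw [lintegral_indicator (measurableSet_singleton 1).compl, ENNReal.ofReal_sub _ (by positivity),
    ← h, ENNReal.add_sub_cancel_left ENNReal.ofReal_ne_top]

/-- Near `z = 1` the even-level mean is `≈ 1 - r e^{-r} < 1`, while the odd-level factor
`z⁻¹` is below `1` as soon as `z > 1`. -/
lemma exists_lintegral_chernoffWeight_le {r : ℝ≥0} (hr : 0 < r) :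
    ∃ z : ℝ≥0, 1 ≤ z ∧ ∃ ρ : ℝ, 0 < ρ ∧ ρ < 1 ∧
      ∀ ω j, ∫⁻ n, chernoffWeight z ω j n ∂Po(r) ≤ ENNReal.ofReal ρ := by
  set g : ℝ → ℝ := fun x => Real.exp (r * (x - 1)) - x * r * Real.exp (-r)
  have hg1 : g 1 < 1 := by
    have : 0 < (r : ℝ) * Real.exp (-r) := by positivity
    simp only [g, sub_self, mul_zero, Real.exp_zero, one_mul]
    linarith
  have hcont : ContinuousAt g 1 := by fun_prop
  obtain ⟨x, hgx, hx1⟩ := ((hcont.eventually_lt continuousAt_const hg1).filter_mono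
    nhdsWithin_le_nhds |>.and (self_mem_nhdsWithin (s := Set.Ioi 1))).exists
  have hx1 : (1 : ℝ) < x := hx1
  have hx0 : (0 : ℝ) ≤ x := by linarith
  refine ⟨x.toNNReal, by simpa using hx1.le, max (g x) x⁻¹, by positivity,
    max_lt hgx (inv_lt_one_of_one_lt₀ hx1), fun ω j => ?_⟩
  unfold chernoffWeight
  split_ifs
  · rw [lintegral_indicator_pow_poissonMeasure, Real.coe_toNNReal x hx0]
    exact ENNReal.ofReal_le_ofReal (le_max_left _ _)
  · rw [lintegral_const, measure_univ, mul_one, ← ENNReal.ofReal_coe_nnreal,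
      Real.coe_toNNReal x hx0, ← ENNReal.ofReal_inv_of_pos (by linarith)]
    exact ENNReal.ofReal_le_ofReal (le_max_right _ _)

def EvenLevelSingleChild (ω : ℕ → ℕ) (i : ℕ) : Prop :=
  treeAtLeast ω (i + 1) ∧ Even (level ω i) ∧ ω i = 1

lemma EvenLevelSingleChild.congr {ω ω' : ℕ → ℕ} {i : ℕ} (h : EvenLevelSingleChild ω i)
    (hω : ∀ t ≤ i, ω t = ω' t) : EvenLevelSingleChild ω' i := by
  obtain ⟨hT, he, h1⟩ := h
  refine ⟨hT.congr fun t ht => hω t (by omega), ?_, hω i le_rfl ▸ h1⟩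
  rwa [← level_congr hT fun t ht => hω t ht.le]

def noEvenLevelSingleChildBelow (k : ℕ) : Set (ℕ → ℕ) :=
  {ω | treeAtLeast ω k ∧ ∀ j < k, ¬(Even (level ω j) ∧ ω j = 1)}

lemma noEvenLevelSingleChildBelow_congr {k : ℕ} ⦃ω ω' : ℕ → ℕ⦄
    (hω : ∀ t < k, ω t = ω' t) (h : ω ∈ noEvenLevelSingleChildBelow k) :
    ω' ∈ noEvenLevelSingleChildBelow k := by
  obtain ⟨hT, hno⟩ := h
  refine ⟨hT.congr hω, fun j hj hbad => hno j hj ?_⟩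
  rwa [level_congr (hT.mono hj) fun t ht => hω t (by omega), hω j hj]

lemma symmDiff_subset_noEvenLevelSingleChildBelow (k : ℕ) :
    symmDiff {ω | ∃ i, EvenLevelSingleChild ω i} {ω | ∃ i < k, EvenLevelSingleChild ω i}
      ⊆ noEvenLevelSingleChildBelow k := by
  intro ω hω
  rcases Set.mem_symmDiff.1 hω with ⟨⟨i, hi⟩, hnot⟩ | ⟨⟨i, -, hi⟩, hnot⟩
  · have hki : k ≤ i := not_lt.1 fun hik => hnot ⟨i, hik, hi⟩
    exact ⟨hi.1.mono (by omega), fun j hj hbad => hnot ⟨j, hj, hi.1.mono (by omega), hbad⟩⟩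
  · exact absurd ⟨i, hi⟩ hnot

lemma IsPoissonSeedFamily.measure_preimage_restrictSeed {P : ℝ → Measure (ℕ → ℕ)}
    (hP : IsPoissonSeedFamily P) {lam : ℝ} (hlam : 0 < lam) {k : ℕ} (B : Set (Fin k → ℕ)) :
    P lam (restrictSeed k ⁻¹' B) = Measure.pi (fun _ : Fin k => Po(lam.toNNReal)) B := by
  rw [← (hP lam hlam).2 k, Measure.map_apply (by fun_prop) .of_discrete]
  rfl

theorem even_level_one_child_rapidly_determined_general
    (P : ℝ → Measure (ℕ → ℕ)) (hP : IsPoissonSeedFamily P)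
    (A : Set (ℕ → ℕ))
    (hAdef : A = {ω | ∃ i : ℕ, treeAtLeast ω (i + 1) ∧ Even (level ω i) ∧ ω i = 1})
    (lam0 lam1 : EReal) (h0 : 0 ≤ lam0) :
    ∀ lam : ℝ, lam0 < (lam : EReal) → (lam : EReal) < lam1 →
      ∃ C > (0 : ℝ), ∃ c > (0 : ℝ), ∃ k₀ : ℕ, ∃ Ak : ℕ → Set (ℕ → ℕ),
        ∀ k ≥ k₀, TautDetermined k (Ak k) ∧
          P lam (symmDiff A (Ak k)) ≤ ENNReal.ofReal (C * Real.exp (-c * k)) := by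
  intro lam hl0 _
  have hlam : 0 < lam := by exact_mod_cast h0.trans_lt hl0
  obtain ⟨z, hz, ρ, hρ0, hρ1, hmean⟩ :=
    exists_lintegral_chernoffWeight_le (Real.toNNReal_pos.2 hlam)
  refine ⟨1, one_pos, -Real.log ρ, neg_pos.2 (Real.log_neg hρ0 hρ1), 0,
    fun k => {ω | ∃ i < k, EvenLevelSingleChild ω i}, fun k _ =>
      ⟨⟨_, eq_preimage_restrictSeed_of_congr fun ω ω' hω ⟨i, hik, hi⟩ =>
        ⟨i, hik, hi.congr fun t ht => hω t (by omega)⟩⟩, ?_⟩⟩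
  subst hAdef
  calc P lam (symmDiff _ _) ≤ P lam (noEvenLevelSingleChildBelow k) :=
        measure_mono (symmDiff_subset_noEvenLevelSingleChildBelow k)
    _ = Measure.pi (fun _ : Fin k => Po(lam.toNNReal))
          {x | extendSeed k x ∈ noEvenLevelSingleChildBelow k} := by
        rw [← hP.measure_preimage_restrictSeed hlam,
          ← eq_preimage_restrictSeed_of_congr noEvenLevelSingleChildBelow_congr]
    _ ≤ ∫⁻ x, prodWeight (chernoffWeight z) k (extendSeed k x)
          ∂(Measure.pi fun _ : Fin k => Po(lam.toNNReal)) :=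
        meas_le_lintegral₀ .of_discrete fun x hx =>
          one_le_prodWeight_chernoffWeight (by exact_mod_cast hz) ENNReal.coe_ne_top hx.1 hx.2
    _ ≤ ENNReal.ofReal ρ ^ k := lintegral_prodWeight_le_pow (dependsOnPast_chernoffWeight z) hmean k
    _ = ENNReal.ofReal (1 * Real.exp (-(-Real.log ρ) * k)) := by
        rw [one_mul, neg_neg, mul_comm, Real.exp_nat_mul, Real.exp_log hρ0,
          ENNReal.ofReal_pow hρ0.le]

/-- The event that some node on an even level has exactly one child (node `i+1` in
1-based numbering corresponds to 0-based index `i`) is rapidly determined over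
`(λ₀, λ₁)` for every `0 ≤ λ₀ < λ₁ ≤ ∞`. -/
theorem even_level_one_child_rapidly_determined
    (P : ℝ → Measure (ℕ → ℕ)) (hP : IsPoissonSeedFamily P)
    (A : Set (ℕ → ℕ))
    (hAdef : A = {ω | ∃ i : ℕ, treeAtLeast ω (i + 1) ∧ Even (level ω i) ∧ ω i = 1})
    (lam0 lam1 : EReal) (h0 : 0 ≤ lam0) (h01 : lam0 < lam1) :
    ∀ lam : ℝ, lam0 < (lam : EReal) → (lam : EReal) < lam1 →
      ∃ C > (0 : ℝ), ∃ c > (0 : ℝ), ∃ k₀ : ℕ, ∃ Ak : ℕ → Set (ℕ → ℕ),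
        ∀ k ≥ k₀, TautDetermined k (Ak k) ∧
          P lam (symmDiff A (Ak k)) ≤ ENNReal.ofReal (C * Real.exp (-c * k)) :=
  even_level_one_child_rapidly_determined_general P hP A hAdef lam0 lam1 h0
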